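/- arXiv:2501.00183 — 2 statements merged into one kernel-verified Lean document; each statement's English description precedes it below -/
import Mathlib

section
/- Let 2 ≤ p < q < s, K ≥ 2, and let z, z̃ have values a(z), a(z̃), b(z), b(z̃) ≥ 0 with a(z)/2 ≤ a(z̃) ≤ 2a(z) and b(z)/2 ≤ b(z̃) ≤ 2b(z). Suppose λ_z, λ_{z̃} > 1 satisfy Λ = λ_z^p + a(z)λ_z^q + b(z)λ_z^s = λ_{z̃}^p + a(z̃)λ_{z̃}^q + b(z̃)λ_{z̃}^s. Then 2^{-1/p} λ_{z̃} ≤ λ_z ≤ 2^{1/p} λ_{z̃}. -/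
/-!
Write `F_{a,b}(t) = t^p + a t^q + b t^s`. Scaling the argument by `c^{1/p}` with `c ≥ 1` multiplies
every term by at least `c`, since `p` is the smallest exponent. So if `a' ≤ c a` and `b' ≤ c b`, then
`F_{a',b'}(y) ≤ c F_{a,b}(y) ≤ F_{a,b}(c^{1/p} y)`, and strict monotonicity of `F_{a,b}` turns
`F_{a,b}(x) = F_{a',b'}(y)` into `x ≤ c^{1/p} y`. With `c = 2`, applied in both directions, this is
the theorem.
-/

open Real Set

noncomputable def multiPhase (p q s a b t : ℝ) : ℝ :=
  t ^ p + a * t ^ q + b * t ^ s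

lemma mul_rpow_le_rpow_one_div_mul_rpow {c y p t : ℝ} (hc : 1 ≤ c) (hy : 0 ≤ y) (hp : 0 < p)
    (hpt : p ≤ t) : c * y ^ t ≤ (c ^ (1 / p) * y) ^ t := by
  have hc0 : 0 ≤ c := zero_le_one.trans hc
  have hscale : (c ^ (1 / p) * y) ^ t = c ^ (t / p) * y ^ t := by
    rw [mul_rpow (rpow_nonneg hc0 _) hy, ← rpow_mul hc0, one_div_mul_eq_div]
  have hc_le : c ≤ c ^ (t / p) := by
    simpa using rpow_le_rpow_of_exponent_le hc ((one_le_div hp).mpr hpt)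
  rw [hscale]
  exact mul_le_mul_of_nonneg_right hc_le (rpow_nonneg hy _)

section multiPhase

variable {p q s a b : ℝ}

lemma multiPhase_strictMonoOn (hp : 0 < p) (hq : 0 ≤ q) (hs : 0 ≤ s) (ha : 0 ≤ a) (hb : 0 ≤ b) :
    StrictMonoOn (multiPhase p q s a b) (Ici 0) := by
  intro x hx y _ hxy
  have hp' : x ^ p < y ^ p := rpow_lt_rpow hx hxy hp
  have hq' : a * x ^ q ≤ a * y ^ q := mul_le_mul_of_nonneg_left (rpow_le_rpow hx hxy.le hq) ha
  have hs' : b * x ^ s ≤ b * y ^ s := mul_le_mul_of_nonneg_left (rpow_le_rpow hx hxy.le hs) hb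
  unfold multiPhase
  linarith

lemma mul_multiPhase_le_multiPhase_rpow_one_div_mul {c y : ℝ} (hc : 1 ≤ c) (hy : 0 ≤ y)
    (hp : 0 < p) (hpq : p ≤ q) (hqs : q ≤ s) (ha : 0 ≤ a) (hb : 0 ≤ b) :
    c * multiPhase p q s a b y ≤ multiPhase p q s a b (c ^ (1 / p) * y) := by
  have hp' := mul_rpow_le_rpow_one_div_mul_rpow hc hy hp le_rfl
  have hq' := mul_le_mul_of_nonneg_left (mul_rpow_le_rpow_one_div_mul_rpow hc hy hp hpq) ha
  have hs' := mul_le_mul_of_nonneg_left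
    (mul_rpow_le_rpow_one_div_mul_rpow hc hy hp (hpq.trans hqs)) hb
  unfold multiPhase
  linarith

lemma multiPhase_le_mul_multiPhase {c a' b' y : ℝ} (hc : 1 ≤ c) (hy : 0 ≤ y)
    (ha' : a' ≤ c * a) (hb' : b' ≤ c * b) :
    multiPhase p q s a' b' y ≤ c * multiPhase p q s a b y := by
  have hp' : y ^ p ≤ c * y ^ p := le_mul_of_one_le_left (rpow_nonneg hy p) hc
  have hq' := mul_le_mul_of_nonneg_right ha' (rpow_nonneg hy q)
  have hs' := mul_le_mul_of_nonneg_right hb' (rpow_nonneg hy s)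
  unfold multiPhase
  linarith

lemma le_rpow_one_div_mul_of_multiPhase_eq {c a' b' x y : ℝ} (hc : 1 ≤ c)
    (hp : 0 < p) (hpq : p ≤ q) (hqs : q ≤ s) (ha : 0 ≤ a) (hb : 0 ≤ b)
    (ha' : a' ≤ c * a) (hb' : b' ≤ c * b) (hx : 0 ≤ x) (hy : 0 ≤ y)
    (heq : multiPhase p q s a b x = multiPhase p q s a' b' y) :
    x ≤ c ^ (1 / p) * y := by
  by_contra! hlt
  have hmono := multiPhase_strictMonoOn hp (hp.le.trans hpq) (hp.le.trans (hpq.trans hqs)) ha hb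
  have hM : 0 ≤ c ^ (1 / p) * y := mul_nonneg (rpow_nonneg (zero_le_one.trans hc) _) hy
  have := hmono hM hx hlt
  have := multiPhase_le_mul_multiPhase (p := p) (q := q) (s := s) hc hy ha' hb'
  have := mul_multiPhase_le_multiPhase_rpow_one_div_mul hc hy hp hpq hqs ha hb
  linarith

end multiPhase

theorem stmt_1_general (p q s Λ az azt bz bzt lz lzt : ℝ)
    (h2p : 2 ≤ p) (hpq : p < q) (hqs : q < s)
    (haz : 0 ≤ az) (hazt : 0 ≤ azt) (hbz : 0 ≤ bz) (hbzt : 0 ≤ bzt)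
    (ha1 : az / 2 ≤ azt) (ha2 : azt ≤ 2 * az)
    (hb1 : bz / 2 ≤ bzt) (hb2 : bzt ≤ 2 * bz)
    (hlz : 1 < lz) (hlzt : 1 < lzt)
    (hz : Λ = lz ^ p + az * lz ^ q + bz * lz ^ s)
    (hzt : Λ = lzt ^ p + azt * lzt ^ q + bzt * lzt ^ s) :
    (2 : ℝ) ^ (-(1 / p)) * lzt ≤ lz ∧ lz ≤ (2 : ℝ) ^ (1 / p) * lzt := by
  have hp : 0 < p := by linarith
  have heq : multiPhase p q s az bz lz = multiPhase p q s azt bzt lzt := hz.symm.trans hzt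
  have hupper : lz ≤ 2 ^ (1 / p) * lzt :=
    le_rpow_one_div_mul_of_multiPhase_eq one_le_two hp hpq.le hqs.le haz hbz ha2 hb2
      (by linarith) (by linarith) heq
  have hlower : lzt ≤ 2 ^ (1 / p) * lz :=
    le_rpow_one_div_mul_of_multiPhase_eq one_le_two hp hpq.le hqs.le hazt hbzt
      (by linarith) (by linarith) (by linarith) (by linarith) heq.symm
  refine ⟨?_, hupper⟩
  rwa [rpow_neg zero_le_two, inv_mul_le_iff₀ (rpow_pos_of_pos two_pos _)]

/-- If the coefficients at `z` and `z̃` are comparable within a factor 2, then the intrinsic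
scaling parameters `λ_z`, `λ_{z̃}` (both solving `Λ = λ^p + a λ^q + b λ^s`) are comparable
within a factor `2^{1/p}`. -/
theorem stmt_1 (p q s K Λ az azt bz bzt lz lzt : ℝ)
    (h2p : 2 ≤ p) (hpq : p < q) (hqs : q < s) (hK : 2 ≤ K)
    (haz : 0 ≤ az) (hazt : 0 ≤ azt) (hbz : 0 ≤ bz) (hbzt : 0 ≤ bzt)
    (ha1 : az / 2 ≤ azt) (ha2 : azt ≤ 2 * az)
    (hb1 : bz / 2 ≤ bzt) (hb2 : bzt ≤ 2 * bz)
    (hlz : 1 < lz) (hlzt : 1 < lzt)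
    (hz : Λ = lz ^ p + az * lz ^ q + bz * lz ^ s)
    (hzt : Λ = lzt ^ p + azt * lzt ^ q + bzt * lzt ^ s) :
    (2 : ℝ) ^ (-(1 / p)) * lzt ≤ lz ∧ lz ≤ (2 : ℝ) ^ (1 / p) * lzt :=
  stmt_1_general p q s Λ az azt bz bzt lz lzt h2p hpq hqs haz hazt hbz hbzt ha1 ha2 hb1 hb2 hlz hlzt
    hz hzt
end

section
/- Let 2 ≤ p < q < s, K ≥ 2, Λ > 0, and let λ_z, λ_{z̃} > 1, a(z), a(z̃), b(z), b(z̃) ≥ 0 satisfy: (i) Λ = λ_z^p + a(z)λ_z^q + b(z)λ_z^s = λ_{z̃}^p + a(z̃)λ_{z̃}^q + b(z̃)λ_{z̃}^s; (ii) K²λ_z^p ≥ a(z)λ_z^q and K²λ_z^p < b(z)λ_z^s; (iii) a(z) ≤ a(z̃) + (K²−1)λ_z^{p−q} (a Hölder-type bound) and b(z)/2 ≤ b(z̃) ≤ 2b(z). Then λ_z ≥ K^{−2/p} λ_{z̃}. -/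
/-!
Suppose `λ_z < K^{-2/p} λ_{z̃}`, i.e. `μ λ_z < λ_{z̃}` with `μ = K^{2/p}`. Raising to the powers
`p`, `q`, `s` multiplies `λ_z` by `μ^p = K²`, `μ^q ≥ 1` and `μ^s ≥ K ≥ 2`. The Hölder bound lets the
excess of `a(z) λ_z^q` over `a(z̃) λ_z^q` be absorbed into `(K² - 1) λ_z^p`, and `b(z) ≤ 2 b(z̃)`
is absorbed by `μ^s ≥ 2`, so the two representations of `Λ` compare strictly, which is absurd.
-/

open Real

namespace Real

lemma rpow_mul_mul_rpow_lt_rpow {K e r x y : ℝ} (hK : 0 ≤ K) (hx : 0 ≤ x) (hr : 0 < r)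
    (h : K ^ e * x < y) : K ^ (e * r) * x ^ r < y ^ r := by
  rw [rpow_mul hK, ← mul_rpow (rpow_nonneg hK e) hx]
  exact rpow_lt_rpow (by positivity) h hr

lemma mul_rpow_le_rpow_of_rpow_mul_lt {K e r c x y : ℝ} (hK : 0 ≤ K) (hx : 0 ≤ x) (hr : 0 < r)
    (hc : c ≤ K ^ (e * r)) (h : K ^ e * x < y) : c * x ^ r ≤ y ^ r :=
  (mul_le_mul_of_nonneg_right hc (rpow_nonneg hx r)).trans
    (rpow_mul_mul_rpow_lt_rpow hK hx hr h).le

lemma mul_rpow_le_of_le_add_mul_rpow_sub {a a' c x p q : ℝ} (hx : 0 < x)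
    (h : a ≤ a' + c * x ^ (p - q)) : a * x ^ q ≤ a' * x ^ q + c * x ^ p := by
  have hxq : x ^ (p - q) * x ^ q = x ^ p := by rw [← rpow_add hx, sub_add_cancel]
  calc a * x ^ q ≤ (a' + c * x ^ (p - q)) * x ^ q := by gcongr
    _ = a' * x ^ q + c * x ^ p := by rw [add_mul, mul_assoc, hxq]

end Real

theorem stmt_2_general (p q s K Λ az azt bz bzt lz lzt : ℝ)
    (h2p : 2 ≤ p) (hpq : p < q) (hqs : q < s) (hK : 2 ≤ K)
    (hlz : 1 < lz)
    (hazt : 0 ≤ azt) (hbzt : 0 ≤ bzt)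
    (hz : Λ = lz ^ p + az * lz ^ q + bz * lz ^ s)
    (hzt : Λ = lzt ^ p + azt * lzt ^ q + bzt * lzt ^ s)
    (hhold : az ≤ azt + (K ^ 2 - 1) * lz ^ (p - q))
    (hb1 : bz / 2 ≤ bzt) :
    K ^ (-(2 / p)) * lzt ≤ lz := by
  by_contra! hcon
  have hK0 : 0 < K := by linarith
  have hp0 : 0 < p := by linarith
  have hq0 : 0 < q := by linarith
  have hlz0 : 0 ≤ lz := by linarith
  have hscaled : K ^ (2 / p) * lz < lzt := by
    rwa [rpow_neg hK0.le, lt_inv_mul_iff₀ (rpow_pos_of_pos hK0 _)] at hcon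
  have hP : K ^ 2 * lz ^ p < lzt ^ p := by
    simpa [div_mul_cancel₀ _ hp0.ne'] using rpow_mul_mul_rpow_lt_rpow hK0.le hlz0 hp0 hscaled
  have hQ : lz ^ q ≤ lzt ^ q := by
    simpa using mul_rpow_le_rpow_of_rpow_mul_lt hK0.le hlz0 hq0
      (one_le_rpow (by linarith) (by positivity)) hscaled
  have hS : 2 * lz ^ s ≤ lzt ^ s := by
    have hKs : K ≤ K ^ (2 / p * s) := self_le_rpow_of_one_le (by linarith) (by
      rw [div_mul_eq_mul_div, le_div_iff₀ hp0]; linarith)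
    exact mul_rpow_le_rpow_of_rpow_mul_lt hK0.le hlz0 (by linarith) (hK.trans hKs) hscaled
  have hA : az * lz ^ q ≤ azt * lz ^ q + (K ^ 2 - 1) * lz ^ p :=
    mul_rpow_le_of_le_add_mul_rpow_sub (by linarith) hhold
  have hAQ : azt * lz ^ q ≤ azt * lzt ^ q := mul_le_mul_of_nonneg_left hQ hazt
  have hBS : bz * lz ^ s ≤ bzt * lzt ^ s := by
    nlinarith [mul_le_mul_of_nonneg_left hS hbzt, rpow_nonneg hlz0 s]
  linarith

/-- Key algebraic step of Lemma 2.4: in the (p,s)-phase, with a Hölder-type bound on `a`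
and comparability of `b`, one has `λ_z ≥ K^{-2/p} λ_{z̃}`. -/
theorem stmt_2 (p q s K Λ az azt bz bzt lz lzt : ℝ)
    (h2p : 2 ≤ p) (hpq : p < q) (hqs : q < s) (hK : 2 ≤ K) (hΛ : 0 < Λ)
    (hlz : 1 < lz) (hlzt : 1 < lzt)
    (haz : 0 ≤ az) (hazt : 0 ≤ azt) (hbz : 0 ≤ bz) (hbzt : 0 ≤ bzt)
    (hz : Λ = lz ^ p + az * lz ^ q + bz * lz ^ s)
    (hzt : Λ = lzt ^ p + azt * lzt ^ q + bzt * lzt ^ s)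
    (hphase1 : az * lz ^ q ≤ K ^ 2 * lz ^ p)
    (hphase2 : K ^ 2 * lz ^ p < bz * lz ^ s)
    (hhold : az ≤ azt + (K ^ 2 - 1) * lz ^ (p - q))
    (hb1 : bz / 2 ≤ bzt) (hb2 : bzt ≤ 2 * bz) :
    K ^ (-(2 / p)) * lzt ≤ lz :=
  stmt_2_general p q s K Λ az azt bz bzt lz lzt h2p hpq hqs hK hlz hazt hbzt hz hzt hhold hb1
end
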